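/- arXiv:2101.11928 — 5 statements merged into one kernel-verified Lean document; each statement's English description precedes it below -/
import Mathlib

section
/- For 3-parameter generalized vectors p, q, r, the triple cross product satisfies p ∧ (q ∧ r) = f(p,r)·q − f(p,q)·r, where ∧ is the generalized cross product and f is the generalized bilinear form. -/
def gf (l1 l2 l3 : ℝ) (a b : ℝ × ℝ × ℝ) : ℝ :=
  l1*l2*a.1*b.1 + l1*l3*a.2.1*b.2.1 + l2*l3*a.2.2*b.2.2

def gcross (l1 l2 l3 : ℝ) (a b : ℝ × ℝ × ℝ) : ℝ × ℝ × ℝ :=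
  (l3*(a.2.1*b.2.2 - a.2.2*b.2.1), l2*(a.2.2*b.1 - a.1*b.2.2), l1*(a.1*b.2.1 - a.2.1*b.1))

theorem triple_cross_left (l1 l2 l3 : ℝ) (p q r : ℝ × ℝ × ℝ) :
    gcross l1 l2 l3 p (gcross l1 l2 l3 q r) =
      gf l1 l2 l3 p r • q - gf l1 l2 l3 p q • r := by
  ext <;>
    simp only [gcross, gf, Prod.fst_sub, Prod.snd_sub, Prod.smul_fst, Prod.smul_snd, smul_eq_mul] <;>
    ring
end

section
/- For 3-parameter generalized vectors p, q, r, (p ∧ q) ∧ r = f(p,r)·q − f(q,r)·p. -/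
theorem triple_cross_right (l1 l2 l3 : ℝ) (p q r : ℝ × ℝ × ℝ) :
    gcross l1 l2 l3 (gcross l1 l2 l3 p q) r =
      gf l1 l2 l3 p r • q - gf l1 l2 l3 q r • p := by
  ext <;>
    simp only [gcross, gf, Prod.fst_sub, Prod.snd_sub, Prod.smul_fst, Prod.smul_snd,
      smul_eq_mul] <;>
    ring
end

section
/- For all 3PGQs p, q, r: ⟨pr, qr⟩ = N(r)·⟨p,q⟩. -/
def qmul (l1 l2 l3 : ℝ) (p q : ℝ × ℝ × ℝ × ℝ) : ℝ × ℝ × ℝ × ℝ :=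
  (p.1*q.1 - l1*l2*p.2.1*q.2.1 - l1*l3*p.2.2.1*q.2.2.1 - l2*l3*p.2.2.2*q.2.2.2,
   p.1*q.2.1 + p.2.1*q.1 + l3*(p.2.2.1*q.2.2.2 - p.2.2.2*q.2.2.1),
   p.1*q.2.2.1 + p.2.2.1*q.1 + l2*(p.2.2.2*q.2.1 - p.2.1*q.2.2.2),
   p.1*q.2.2.2 + p.2.2.2*q.1 + l1*(p.2.1*q.2.2.1 - p.2.2.1*q.2.1))

def qnorm (l1 l2 l3 : ℝ) (p : ℝ × ℝ × ℝ × ℝ) : ℝ :=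
  p.1^2 + l1*l2*p.2.1^2 + l1*l3*p.2.2.1^2 + l2*l3*p.2.2.2^2

def qinner (l1 l2 l3 : ℝ) (p q : ℝ × ℝ × ℝ × ℝ) : ℝ :=
  p.1*q.1 + l1*l2*p.2.1*q.2.1 + l1*l3*p.2.2.1*q.2.2.1 + l2*l3*p.2.2.2*q.2.2.2

theorem inner_mul_right (l1 l2 l3 : ℝ) (p q r : ℝ × ℝ × ℝ × ℝ) :
    qinner l1 l2 l3 (qmul l1 l2 l3 p r) (qmul l1 l2 l3 q r) =
      qnorm l1 l2 l3 r * qinner l1 l2 l3 p q := by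
  simp only [qinner, qmul, qnorm]
  ring
end

section
/- The map φ sending a 3PGQ p = a₀+a₁e₁+a₂e₂+a₃e₃ to the 4×4 real matrix with rows (a₀, −λ₁λ₂a₁, −λ₁λ₃a₂, −λ₂λ₃a₃), (a₁, a₀, −λ₃a₃, λ₃a₂), (a₂, λ₂a₃, a₀, −λ₂a₁), (a₃, −λ₁a₂, λ₁a₁, a₀) is an injective ring homomorphism from the 3PGQ algebra into M₄(ℝ). -/
def fundM (l1 l2 l3 : ℝ) (p : ℝ × ℝ × ℝ × ℝ) : Matrix (Fin 4) (Fin 4) ℝ :=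
  !![p.1, -l1*l2*p.2.1, -l1*l3*p.2.2.1, -l2*l3*p.2.2.2;
     p.2.1, p.1, -l3*p.2.2.2, l3*p.2.2.1;
     p.2.2.1, l2*p.2.2.2, p.1, -l2*p.2.1;
     p.2.2.2, -l1*p.2.2.1, l1*p.2.1, p.1]

open Matrix

section Coordinates

variable {α : Type*}

def toVec (p : α × α × α × α) : Fin 4 → α := ![p.1, p.2.1, p.2.2.1, p.2.2.2]

theorem toVec_injective : Function.Injective (toVec : α × α × α × α → Fin 4 → α) := by
  intro p q h
  have h0 := congrFun h 0
  have h1 := congrFun h 1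
  have h2 := congrFun h 2
  have h3 := congrFun h 3
  simp only [toVec, Matrix.cons_val] at h0 h1 h2 h3
  exact Prod.ext h0 (Prod.ext h1 (Prod.ext h2 h3))

theorem toVec_surjective : Function.Surjective (toVec : α × α × α × α → Fin 4 → α) :=
  fun v => ⟨(v 0, v 1, v 2, v 3), by ext i; fin_cases i <;> rfl⟩

theorem toVec_add [Add α] (p q : α × α × α × α) : toVec (p + q) = toVec p + toVec q := by
  ext i; fin_cases i <;> rfl

theorem Matrix.ext_of_mulVec_toVec {R : Type*} [NonAssocSemiring R]
    {A B : Matrix (Fin 4) (Fin 4) R} (h : ∀ q, A *ᵥ toVec q = B *ᵥ toVec q) : A = B :=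
  Matrix.ext_iff_mulVec.2 fun v => by
    obtain ⟨q, rfl⟩ := toVec_surjective v
    exact h q

end Coordinates

section Algebra

variable (l1 l2 l3 : ℝ)

theorem qmul_assoc (p q r : ℝ × ℝ × ℝ × ℝ) :
    qmul l1 l2 l3 (qmul l1 l2 l3 p q) r = qmul l1 l2 l3 p (qmul l1 l2 l3 q r) := by
  simp only [qmul, Prod.mk.injEq]
  refine ⟨?_, ?_, ?_, ?_⟩ <;> ring

theorem add_qmul (p q r : ℝ × ℝ × ℝ × ℝ) :
    qmul l1 l2 l3 (p + q) r = qmul l1 l2 l3 p r + qmul l1 l2 l3 q r := by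
  simp only [qmul, Prod.fst_add, Prod.snd_add, Prod.mk_add_mk, Prod.mk.injEq]
  refine ⟨?_, ?_, ?_, ?_⟩ <;> ring

theorem one_qmul (q : ℝ × ℝ × ℝ × ℝ) : qmul l1 l2 l3 (1, 0, 0, 0) q = q := by
  simp [qmul]

theorem qmul_one (p : ℝ × ℝ × ℝ × ℝ) : qmul l1 l2 l3 p (1, 0, 0, 0) = p := by
  simp [qmul]

theorem fundM_mulVec_toVec (p q : ℝ × ℝ × ℝ × ℝ) :
    fundM l1 l2 l3 p *ᵥ toVec q = toVec (qmul l1 l2 l3 p q) := by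
  ext i
  fin_cases i <;> simp [fundM, qmul, toVec, mulVec, dotProduct, Fin.sum_univ_four] <;> ring

theorem fundM_add (p q : ℝ × ℝ × ℝ × ℝ) :
    fundM l1 l2 l3 (p + q) = fundM l1 l2 l3 p + fundM l1 l2 l3 q :=
  Matrix.ext_of_mulVec_toVec fun r => by
    rw [Matrix.add_mulVec, fundM_mulVec_toVec, fundM_mulVec_toVec, fundM_mulVec_toVec,
      add_qmul, toVec_add]

theorem fundM_qmul (p q : ℝ × ℝ × ℝ × ℝ) :
    fundM l1 l2 l3 (qmul l1 l2 l3 p q) = fundM l1 l2 l3 p * fundM l1 l2 l3 q :=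
  Matrix.ext_of_mulVec_toVec fun r => by
    rw [← Matrix.mulVec_mulVec, fundM_mulVec_toVec, fundM_mulVec_toVec, fundM_mulVec_toVec,
      qmul_assoc]

theorem fundM_one : fundM l1 l2 l3 (1, 0, 0, 0) = 1 :=
  Matrix.ext_of_mulVec_toVec fun q => by
    rw [fundM_mulVec_toVec, one_qmul, Matrix.one_mulVec]

theorem fundM_injective : Function.Injective (fundM l1 l2 l3) := fun p q h =>
  toVec_injective <| by
    rw [← qmul_one l1 l2 l3 p, ← qmul_one l1 l2 l3 q, ← fundM_mulVec_toVec,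
      ← fundM_mulVec_toVec, h]

end Algebra

theorem fundM_ring_hom (l1 l2 l3 : ℝ) :
    (∀ p q : ℝ × ℝ × ℝ × ℝ,
        fundM l1 l2 l3 (p + q) = fundM l1 l2 l3 p + fundM l1 l2 l3 q) ∧
    (∀ p q : ℝ × ℝ × ℝ × ℝ,
        fundM l1 l2 l3 (qmul l1 l2 l3 p q) = fundM l1 l2 l3 p * fundM l1 l2 l3 q) ∧
    fundM l1 l2 l3 (1, 0, 0, 0) = 1 ∧
    Function.Injective (fundM l1 l2 l3) :=
  ⟨fundM_add l1 l2 l3, fundM_qmul l1 l2 l3, fundM_one l1 l2 l3, fundM_injective l1 l2 l3⟩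
end

section
/- The characteristic polynomial of the fundamental matrix M(p) of a 3PGQ p is (t² − 2a₀t + a₀² + λ₁λ₂a₁² + λ₁λ₃a₂² + λ₂λ₃a₃²)². -/
/-!
Write `M(p) = a₀ • 1 + N`, where `N = M(0, a₁, a₂, a₃)` is the matrix of the pure part of `p`.
Shifting a matrix by a scalar shifts its characteristic polynomial, so it suffices to see that
`N` has characteristic polynomial `(t² + q)²` with `q = λ₁λ₂a₁² + λ₁λ₃a₂² + λ₂λ₃a₃²`, which is a
direct cofactor expansion (`N` behaves like a pure quaternion: `N² = -q • 1`).
-/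

open Polynomial

theorem Matrix.charpoly_eq_comp_sub_scalar {n R : Type*} [Fintype n] [DecidableEq n]
    [CommRing R] (M : Matrix n n R) (μ : R) :
    M.charpoly = (M - scalar n μ).charpoly.comp (X - C μ) := by
  rw [charpoly_sub_scalar, comp_assoc]
  simp

theorem fundM_sub_scalar (l1 l2 l3 : ℝ) (p : ℝ × ℝ × ℝ × ℝ) :
    fundM l1 l2 l3 p - Matrix.scalar (Fin 4) p.1 = fundM l1 l2 l3 (0, p.2) := by
  ext i j
  fin_cases i <;> fin_cases j <;> simp [fundM]

theorem charmatrix_fundM_zero (l1 l2 l3 a1 a2 a3 : ℝ) :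
    (fundM l1 l2 l3 (0, a1, a2, a3)).charmatrix =
      !![X, C (l1*l2*a1), C (l1*l3*a2), C (l2*l3*a3);
         -C a1, X, C (l3*a3), -C (l3*a2);
         -C a2, -C (l2*a3), X, C (l2*a1);
         -C a3, C (l1*a2), -C (l1*a1), X] := by
  ext i j
  fin_cases i <;> fin_cases j <;> simp [fundM]

theorem charpoly_fundM_zero (l1 l2 l3 a1 a2 a3 : ℝ) :
    (fundM l1 l2 l3 (0, a1, a2, a3)).charpoly =
      (X^2 + C (l1*l2*a1^2 + l1*l3*a2^2 + l2*l3*a3^2))^2 := by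
  rw [Matrix.charpoly, charmatrix_fundM_zero, Matrix.det_succ_row_zero]
  simp only [Fin.sum_univ_four, Matrix.det_fin_three, Matrix.submatrix_apply, Fin.succAbove,
    Fin.reduceLT, Fin.reduceSucc, Fin.reduceCastSucc, ↓reduceIte, Matrix.of_apply,
    Matrix.cons_val, Fin.coe_ofNat_eq_mod, map_add, map_mul, map_pow]
  ring

theorem fundM_charpoly (l1 l2 l3 : ℝ) (p : ℝ × ℝ × ℝ × ℝ) :
    (fundM l1 l2 l3 p).charpoly =
      (X^2 - C (2*p.1) * X +
        C (p.1^2 + l1*l2*p.2.1^2 + l1*l3*p.2.2.1^2 + l2*l3*p.2.2.2^2))^2 := by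
  obtain ⟨a0, a1, a2, a3⟩ := p
  rw [Matrix.charpoly_eq_comp_sub_scalar _ a0, fundM_sub_scalar, charpoly_fundM_zero]
  rw [pow_comp, add_comp, pow_comp, X_comp, C_comp]
  simp only [map_add, map_mul, map_pow, map_ofNat]
  ring
end
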